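/- Let 𝔤 be a finite-dimensional nilpotent Lie algebra over a field of characteristic zero which is not abelian (i.e. [𝔤, 𝔤] ≠ 0). Then the abelianization 𝔤/[𝔤, 𝔤] has dimension at least 2; equivalently, the first Lie algebra cohomology b¹(𝔤) = dim(𝔤/[𝔤, 𝔤])* is at least 2. -/

import Mathlib

/-- Dixmier's theorem: a finite-dimensional non-abelian nilpotent Lie algebra over a
field of characteristic zero has abelianization of dimension at least `2`;
equivalently `b¹(𝔤) ≥ 2`. -/
theorem nilpotent_abelianization_dim_ge_two
    {K : Type*} [Field K] [CharZero K]
    {L : Type*} [LieRing L] [LieAlgebra K L] [FiniteDimensional K L]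
    [LieRing.IsNilpotent L]
    (h : LieAlgebra.derivedSeries K L 1 ≠ ⊥) :
    2 ≤ Module.finrank K (L ⧸ LieAlgebra.derivedSeries K L 1) := by
  set D := LieAlgebra.derivedSeries K L 1 with hD
  by_contra hlt
  push_neg at hlt
  have h1 : Module.finrank K (L ⧸ D) ≤ 1 := by omega
  obtain ⟨v, hv⟩ := finrank_le_one_iff.mp h1
  obtain ⟨x, rfl⟩ := LieSubmodule.Quotient.surjective_mk' D v
  have key : ∀ w : L, ∃ c : K, w - c • x ∈ D := by
    intro w
    obtain ⟨c, hc⟩ := hv (LieSubmodule.Quotient.mk' D w)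
    refine ⟨c, ?_⟩
    rw [← LieSubmodule.Quotient.mk_eq_zero, map_sub, map_smul, hc, sub_self]
  -- D ≤ ⁅⊤, D⁆
  have hle : D ≤ ⁅(⊤ : LieIdeal K L), D⁆ := by
    have hD1 : D = ⁅(⊤ : LieIdeal K L), (⊤ : LieIdeal K L)⁆ := by
      rw [hD, LieAlgebra.derivedSeries_def, LieAlgebra.derivedSeriesOfIdeal_succ,
        LieAlgebra.derivedSeriesOfIdeal_zero]
    conv_lhs => rw [hD1]
    rw [LieSubmodule.lie_le_iff]
    intro y _ z _
    obtain ⟨c, hc⟩ := key y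
    obtain ⟨e, he⟩ := key z
    have hy : y = c • x + (y - c • x) := by abel
    have hz : z = e • x + (z - e • x) := by abel
    have m1 : ⁅y, z - e • x⁆ ∈ ⁅(⊤ : LieIdeal K L), D⁆ :=
      LieSubmodule.lie_mem_lie trivial he
    have m2 : ⁅y, x⁆ ∈ ⁅(⊤ : LieIdeal K L), D⁆ := by
      have : ⁅y, x⁆ = -⁅x, y - c • x⁆ := by
        rw [lie_sub, lie_smul, lie_self, smul_zero, sub_zero, lie_skew]
      rw [this]
      exact neg_mem (LieSubmodule.lie_mem_lie trivial hc)
    have : ⁅y, z⁆ = e • ⁅y, x⁆ + ⁅y, z - e • x⁆ := by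
      conv_lhs => rw [hz]
      rw [lie_add, lie_smul]
    rw [this]
    exact add_mem (SMulMemClass.smul_mem _ m2) m1
  -- D is contained in every term of the lower central series
  have hlcs : ∀ n, D ≤ LieModule.lowerCentralSeries K L L n := by
    intro n
    induction n with
    | zero => simp
    | succ n ih =>
      rw [LieModule.lowerCentralSeries_succ]
      exact hle.trans (LieSubmodule.mono_lie_right _ ih)
  obtain ⟨k, hk⟩ := LieModule.IsNilpotent.nilpotent K L L
  exact h (le_bot_iff.mp (hk ▸ hlcs k))
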